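/- (Tweedie's formula / score-based MMSE estimator.) Let μ be a probability measure on ℝⁿ with finite first moment and σ > 0, and let y ∈ ℝⁿ satisfy p(y) > 0, where p(y) = ∫ g_σ(y − h) dμ(h). Then the posterior mean satisfies m(y) = y + σ² ∇_y log p(y), where ∇_y log p(y) = ∇p(y)/p(y) is the Stein's score function of the measurement density. In particular, the Bayes-optimal MMSE channel estimator for the observation model y = h + n, n ~ N(0, σ²Iₙ), is determined solely by the received signal y, the noise level σ, and the score function of p. -/

import Mathlib

set_option synthInstance.maxHeartbeats 1000000
set_option maxHeartbeats 1000000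

open MeasureTheory Real

noncomputable def gaussDensity (n : ℕ) (σ : ℝ) (x : EuclideanSpace ℝ (Fin n)) : ℝ :=
  (2 * π * σ ^ 2) ^ (-(n : ℝ) / 2) * Real.exp (-‖x‖ ^ 2 / (2 * σ ^ 2))

section aux
variable {n : ℕ} {σ : ℝ}

lemma gauss_cont : Continuous (gaussDensity n σ) :=
  continuous_const.mul (Real.continuous_exp.comp ((continuous_norm.pow 2).neg.div_const _))

lemma gauss_pos (hσ : 0 < σ) (x : EuclideanSpace ℝ (Fin n)) : 0 < gaussDensity n σ x := by
  have hπ := Real.pi_pos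
  unfold gaussDensity
  positivity

lemma gauss_le (x : EuclideanSpace ℝ (Fin n)) (hσ : 0 < σ) :
    gaussDensity n σ x ≤ (2 * π * σ ^ 2) ^ (-(n : ℝ) / 2) := by
  have hπ := Real.pi_pos
  have hc : (0:ℝ) < (2 * π * σ ^ 2) ^ (-(n : ℝ) / 2) := by positivity
  have : Real.exp (-‖x‖ ^ 2 / (2 * σ ^ 2)) ≤ 1 := by
    apply Real.exp_le_one_iff.mpr
    apply div_nonpos_of_nonpos_of_nonneg (by simp [sq_nonneg]) (by positivity)
  calc gaussDensity n σ x ≤ (2 * π * σ ^ 2) ^ (-(n : ℝ) / 2) * 1 := by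
        unfold gaussDensity; exact mul_le_mul_of_nonneg_left this hc.le
    _ = _ := mul_one _

lemma gauss_mul_norm_le (x : EuclideanSpace ℝ (Fin n)) (hσ : 0 < σ) :
    gaussDensity n σ x * ‖x‖ ≤ (2 * π * σ ^ 2) ^ (-(n : ℝ) / 2) * σ := by
  have hπ := Real.pi_pos
  have hc : (0:ℝ) < (2 * π * σ ^ 2) ^ (-(n : ℝ) / 2) := by positivity
  have key : Real.exp (-‖x‖ ^ 2 / (2 * σ ^ 2)) * ‖x‖ ≤ σ := by
    set r := ‖x‖ with hr
    have hr0 : 0 ≤ r := norm_nonneg _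
    have he : 1 + r ^ 2 / (2 * σ ^ 2) ≤ Real.exp (r ^ 2 / (2 * σ ^ 2)) := by
      have := Real.add_one_le_exp (r ^ 2 / (2 * σ ^ 2)); linarith
    have hep : 0 < Real.exp (r ^ 2 / (2 * σ ^ 2)) := Real.exp_pos _
    have h1 : r ≤ σ * Real.exp (r ^ 2 / (2 * σ ^ 2)) := by
      have h2 : σ * (1 + r ^ 2 / (2 * σ ^ 2)) - r = (σ ^ 2 + (r - σ) ^ 2) / (2 * σ) := by
        field_simp; ring
      have h3 : (0:ℝ) ≤ (σ ^ 2 + (r - σ) ^ 2) / (2 * σ) := by positivity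
      have h4 := mul_le_mul_of_nonneg_left he hσ.le
      linarith
    have hneg : Real.exp (-r ^ 2 / (2 * σ ^ 2)) = (Real.exp (r ^ 2 / (2 * σ ^ 2)))⁻¹ := by
      rw [← Real.exp_neg]; ring_nf
    rw [hneg]
    rw [inv_mul_le_iff₀ hep] at *
    · nlinarith
  calc gaussDensity n σ x * ‖x‖
      = (2 * π * σ ^ 2) ^ (-(n : ℝ) / 2) * (Real.exp (-‖x‖ ^ 2 / (2 * σ ^ 2)) * ‖x‖) := by
        unfold gaussDensity; ring
    _ ≤ _ := mul_le_mul_of_nonneg_left key hc.le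

lemma gauss_hasFDerivAt (hσ : 0 < σ) (x : EuclideanSpace ℝ (Fin n)) :
    HasFDerivAt (gaussDensity n σ)
      ((-(σ ^ 2)⁻¹ * gaussDensity n σ x) • innerSL ℝ x) x := by
  have h1 : HasFDerivAt (fun x : EuclideanSpace ℝ (Fin n) => ‖x‖ ^ 2)
      (2 • innerSL ℝ x) x := by
    simpa using (hasFDerivAt_id x).norm_sq
  have h2 := h1.const_mul (-(2 * σ ^ 2))⁻¹
  have h3 : HasFDerivAt (fun x : EuclideanSpace ℝ (Fin n) => -‖x‖ ^ 2 / (2 * σ ^ 2))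
      ((-(σ ^ 2)⁻¹) • innerSL ℝ x) x := by
    have e1 : (fun x : EuclideanSpace ℝ (Fin n) => -‖x‖ ^ 2 / (2 * σ ^ 2)) =
        fun y => (-(2 * σ ^ 2))⁻¹ * ‖y‖ ^ 2 := by
      funext z; field_simp
    rw [e1]
    refine h2.congr_fderiv ?_
    · ext v
      simp only [ContinuousLinearMap.coe_smul', Pi.smul_apply, smul_eq_mul,
        ContinuousLinearMap.smul_apply, nsmul_eq_mul]
      have : σ ^ 2 ≠ 0 := by positivity
      field_simp
      ring
  have h4 := (h3.exp).const_mul ((2 * π * σ ^ 2) ^ (-(n : ℝ) / 2))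
  refine h4.congr_fderiv ?_
  ext v
  simp only [gaussDensity, ContinuousLinearMap.smul_apply, smul_eq_mul,
    ContinuousLinearMap.coe_smul', Pi.smul_apply]
  ring

end aux

/-- Tweedie's formula / score-based MMSE estimator: at every `y` with `p(y) > 0`, the
posterior mean satisfies `m(y) = y + σ² ∇_y log p(y)`, where
`∇_y log p(y) = ∇p(y)/p(y)` is Stein's score function of the measurement density
`p(y) = ∫ g_σ(y - h) dμ(h)`. -/
theorem tweedie_formula (n : ℕ) (σ : ℝ) (hσ : 0 < σ)
    (μ : Measure (EuclideanSpace ℝ (Fin n))) [IsProbabilityMeasure μ]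
    (hmom : Integrable (fun h => ‖h‖) μ) (y : EuclideanSpace ℝ (Fin n))
    (hpy : 0 < ∫ h, gaussDensity n σ (y - h) ∂μ) :
    (∫ h, gaussDensity n σ (y - h) ∂μ)⁻¹ • (∫ h, gaussDensity n σ (y - h) • h ∂μ) =
      y + σ ^ 2 •
        ((∫ h, gaussDensity n σ (y - h) ∂μ)⁻¹ •
          gradient (fun y' => ∫ h, gaussDensity n σ (y' - h) ∂μ) y) := by
  have hπ := Real.pi_pos
  set c : ℝ := (2 * π * σ ^ 2) ^ (-(n : ℝ) / 2) with hc_def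
  have hc : 0 < c := by positivity
  have hσ2 : (σ : ℝ) ^ 2 ≠ 0 := by positivity
  set F' : EuclideanSpace ℝ (Fin n) → EuclideanSpace ℝ (Fin n) →
      (EuclideanSpace ℝ (Fin n) →L[ℝ] ℝ) :=
    fun x h => (-(σ ^ 2)⁻¹ * gaussDensity n σ (x - h)) • innerSL ℝ (x - h) with hF'_def
  have hF'diff : ∀ (h x : EuclideanSpace ℝ (Fin n)),
      HasFDerivAt (fun y' => gaussDensity n σ (y' - h)) (F' x h) x := by
    intro h x
    have h1 := (gauss_hasFDerivAt hσ (x - h)).comp x ((hasFDerivAt_id x).sub_const h)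
    exact h1.congr_fderiv (ContinuousLinearMap.comp_id _)
  have hmeasF : ∀ x : EuclideanSpace ℝ (Fin n),
      AEStronglyMeasurable (fun h => gaussDensity n σ (x - h)) μ := fun x =>
    (gauss_cont.comp (continuous_const.sub continuous_id)).aestronglyMeasurable
  have hint : ∀ x, Integrable (fun h => gaussDensity n σ (x - h)) μ := fun x =>
    (integrable_const c).mono' (hmeasF x) (ae_of_all _ fun h => by
      rw [Real.norm_eq_abs, abs_of_pos (gauss_pos hσ _)]; exact gauss_le _ hσ)
  have hcontF' : ∀ x, Continuous (fun h => F' x h) := fun x =>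
    ((continuous_const.mul (gauss_cont.comp (continuous_const.sub continuous_id))).smul
      ((innerSL ℝ).continuous.comp (continuous_const.sub continuous_id)))
  have habs : ∀ x h : EuclideanSpace ℝ (Fin n),
      |(-(σ ^ 2)⁻¹ * gaussDensity n σ (x - h))| = (σ ^ 2)⁻¹ * gaussDensity n σ (x - h) := by
    intro x h
    rw [abs_mul, abs_neg, abs_inv, abs_of_pos (by positivity : (0:ℝ) < σ ^ 2),
      abs_of_pos (gauss_pos hσ _)]
  have hbnd : ∀ x h : EuclideanSpace ℝ (Fin n), ‖F' x h‖ ≤ c / σ := by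
    intro x h
    rw [hF'_def]
    simp only []
    rw [norm_smul (-(σ ^ 2)⁻¹ * gaussDensity n σ (x - h)) (innerSL ℝ (x - h)),
      innerSL_apply_norm, Real.norm_eq_abs, habs, mul_assoc]
    have h1 : gaussDensity n σ (x - h) * ‖x - h‖ ≤ c * σ := gauss_mul_norm_le _ hσ
    have h2 : (σ ^ 2)⁻¹ * (gaussDensity n σ (x - h) * ‖x - h‖) ≤ (σ ^ 2)⁻¹ * (c * σ) :=
      mul_le_mul_of_nonneg_left h1 (by positivity)
    calc (σ ^ 2)⁻¹ * (gaussDensity n σ (x - h) * ‖x - h‖) ≤ (σ ^ 2)⁻¹ * (c * σ) := h2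
      _ = c / σ := by field_simp
  have hF'int : ∀ x, Integrable (F' x) μ := fun x =>
    (integrable_const (c / σ)).mono' (hcontF' x).aestronglyMeasurable
      (ae_of_all _ fun h => hbnd x h)
  have hp : HasFDerivAt (fun y' => ∫ h, gaussDensity n σ (y' - h) ∂μ) (∫ h, F' y h ∂μ) y :=
    hasFDerivAt_integral_of_dominated_of_fderiv_le (Metric.ball_mem_nhds y one_pos)
      (Filter.Eventually.of_forall fun x => hmeasF x) (hint y)
      (hcontF' y).aestronglyMeasurable
      (ae_of_all _ fun h x _ => hbnd x h)
      (integrable_const _)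
      (ae_of_all _ fun h x _ => hF'diff h x)
  set v : EuclideanSpace ℝ (Fin n) → EuclideanSpace ℝ (Fin n) :=
    fun h => (-(σ ^ 2)⁻¹ * gaussDensity n σ (y - h)) • (y - h) with hv_def
  have hvcont : Continuous v :=
    (continuous_const.mul (gauss_cont.comp (continuous_const.sub continuous_id))).smul
      (continuous_const.sub continuous_id)
  have hvint : Integrable v μ := by
    refine (integrable_const (c / σ)).mono' hvcont.aestronglyMeasurable (ae_of_all _ fun h => ?_)
    rw [hv_def]
    simp only []
    rw [norm_smul, Real.norm_eq_abs, habs, mul_assoc]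
    have h1 : gaussDensity n σ (y - h) * ‖y - h‖ ≤ c * σ := gauss_mul_norm_le _ hσ
    calc (σ ^ 2)⁻¹ * (gaussDensity n σ (y - h) * ‖y - h‖) ≤ (σ ^ 2)⁻¹ * (c * σ) :=
        mul_le_mul_of_nonneg_left h1 (by positivity)
      _ = c / σ := by field_simp
  have hgrad : HasGradientAt (fun y' => ∫ h, gaussDensity n σ (y' - h) ∂μ) (∫ h, v h ∂μ) y := by
    rw [hasGradientAt_iff_hasFDerivAt]
    refine hp.congr_fderiv ?_
    ext u
    rw [InnerProductSpace.toDual_apply_apply, real_inner_comm, ← integral_inner hvint u,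
      ContinuousLinearMap.integral_apply (hF'int y)]
    refine integral_congr_ae (ae_of_all _ fun h => ?_)
    rw [hv_def, hF'_def]
    simp only [ContinuousLinearMap.coe_smul', Pi.smul_apply, innerSL_apply_apply, smul_eq_mul,
      real_inner_smul_right]
    rw [real_inner_comm]
  have hI2 : Integrable (fun h => gaussDensity n σ (y - h) • h) μ := by
    refine (hmom.const_mul c).mono'
      (((gauss_cont.comp (continuous_const.sub continuous_id)).smul
        continuous_id).aestronglyMeasurable) (ae_of_all _ fun h => ?_)
    rw [norm_smul, Real.norm_eq_abs, abs_of_pos (gauss_pos hσ _)]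
    exact mul_le_mul_of_nonneg_right (gauss_le _ hσ) (norm_nonneg _)
  set p : ℝ := ∫ h, gaussDensity n σ (y - h) ∂μ with hp_def
  set q : EuclideanSpace ℝ (Fin n) := ∫ h, gaussDensity n σ (y - h) • h ∂μ with hq_def
  have integrand_eq : v = fun h =>
      (σ ^ 2)⁻¹ • (gaussDensity n σ (y - h) • h - gaussDensity n σ (y - h) • y) := by
    funext h
    rw [hv_def]
    module
  have hG : (∫ h, v h ∂μ) = (σ ^ 2)⁻¹ • (q - p • y) := by
    rw [integrand_eq]
    rw [integral_smul, integral_sub hI2 ((hint y).smul_const y), integral_smul_const]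
  rw [hgrad.gradient, hG]
  have hp0 : p ≠ 0 := ne_of_gt hpy
  have key : σ ^ 2 • (p⁻¹ • ((σ ^ 2)⁻¹ • (q - p • y))) = p⁻¹ • q - y := by
    rw [smul_comm (σ ^ 2), smul_smul (σ ^ 2), mul_inv_cancel₀ hσ2, one_smul, smul_sub,
      smul_smul, inv_mul_cancel₀ hp0, one_smul]
  rw [key]
  abel
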